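/- arXiv:2603.04666 — 3 statements merged into one kernel-verified Lean document; each statement's English description precedes it below -/
import Mathlib

section
/- For integers t, x, and y with y > 0, the quintuple product satisfies the shift relation Q(q^{x+ty}, q^y) = q^{-3tx - t(3t-1)y/2} · Q(q^x, q^y). -/
/-!
Multiplying `z` by the base `q` changes each of the five Pochhammer factors of `Q(z, q)` by a
single boundary factor, and these combine to `Q(qz, q) = (q z³)⁻¹ Q(z, q)`. Iterating this
with base `q^y` from `z = q^x` gives the shift relation, the pentagonal numbers `t(3t-1)/2`
accumulating in the exponent.
-/

/-- The q-Pochhammer infinite product `(a;q)_∞ = ∏_{k≥0} (1 - a q^k)`. -/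
noncomputable def poch (a q : ℂ) : ℂ := ∏' k : ℕ, (1 - a * q ^ k)

/-- The quintuple product `Q(z,q) = (z,q/z,q;q)_∞ (qz²,q/z²;q²)_∞`. -/
noncomputable def quint (z q : ℂ) : ℂ :=
  poch z q * poch (q / z) q * poch q q * poch (q * z ^ 2) (q ^ 2) * poch (q / z ^ 2) (q ^ 2)

lemma multipliable_one_sub_mul_pow (b : ℂ) {q : ℂ} (hq : ‖q‖ < 1) :
    Multipliable fun k : ℕ => 1 - b * q ^ k := by
  simp_rw [sub_eq_add_neg]
  apply multipliable_one_add_of_summable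
  simpa [norm_pow] using (summable_geometric_of_lt_one (norm_nonneg q) hq).mul_left ‖b‖

lemma poch_eq_one_sub_mul_poch (a : ℂ) {q : ℂ} (hq : ‖q‖ < 1) :
    poch a q = (1 - a) * poch (a * q) q := by
  have hpow (k : ℕ) : 1 - a * q ^ (k + 1) = 1 - a * q * q ^ k := by ring
  have htail : Multipliable fun k : ℕ => 1 - a * q ^ (k + 1) := by
    simpa only [hpow] using multipliable_one_sub_mul_pow (a * q) hq
  rw [poch, tprod_eq_zero_mul' (f := fun k : ℕ => 1 - a * q ^ k) htail]
  simp only [pow_zero, mul_one, hpow, poch]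

lemma quint_mul_left {z q : ℂ} (hz : z ≠ 0) (hq0 : q ≠ 0) (hq1 : ‖q‖ < 1) :
    quint (q * z) q = (q * z ^ 3)⁻¹ * quint z q := by
  have hq2 : ‖q ^ 2‖ < 1 := by
    rw [norm_pow]
    exact pow_lt_one₀ (norm_nonneg q) hq1 two_ne_zero
  have h1 : poch (q / (q * z)) q = (1 - z⁻¹) * poch (q / z) q := by
    rw [poch_eq_one_sub_mul_poch _ hq1]
    congr 2 <;> field_simp
  have h2 : poch (q / (q * z) ^ 2) (q ^ 2) =
      (1 - (q * z ^ 2)⁻¹) * poch (q / z ^ 2) (q ^ 2) := by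
    rw [poch_eq_one_sub_mul_poch _ hq2]
    congr 2 <;> field_simp
  have h3 : poch z q = (1 - z) * poch (q * z) q := by
    rw [poch_eq_one_sub_mul_poch _ hq1, mul_comm z q]
  have h4 : poch (q * z ^ 2) (q ^ 2) = (1 - q * z ^ 2) * poch (q * (q * z) ^ 2) (q ^ 2) := by
    rw [poch_eq_one_sub_mul_poch _ hq2]
    ring_nf
  have hboundary :
      (1 - z⁻¹) * (1 - (q * z ^ 2)⁻¹) = (q * z ^ 3)⁻¹ * ((1 - z) * (1 - q * z ^ 2)) := by
    field_simp
    ring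
  simp only [quint, h1, h2, h3, h4]
  linear_combination (poch (q * z) q * poch (q / z) q * poch q q *
    poch (q * (q * z) ^ 2) (q ^ 2) * poch (q / z ^ 2) (q ^ 2)) * hboundary

lemma quint_zpow_add {q : ℂ} (hq0 : q ≠ 0) {y : ℤ} (hy : 0 < y) (hq1 : ‖q‖ < 1) (s : ℤ) :
    quint (q ^ (s + y)) (q ^ y) = q ^ (-y - 3 * s) * quint (q ^ s) (q ^ y) := by
  have hqy : ‖q ^ y‖ < 1 := by
    lift y to ℕ using hy.le
    rw [zpow_natCast, norm_pow]
    exact pow_lt_one₀ (norm_nonneg q) hq1 (by omega)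
  rw [add_comm, zpow_add₀ hq0,
    quint_mul_left (zpow_ne_zero s hq0) (zpow_ne_zero y hq0) hqy, ← zpow_natCast (q ^ s) 3,
    ← zpow_mul, ← zpow_add₀ hq0, ← zpow_neg]
  congr 2
  push_cast
  ring

lemma pentagonal_succ (t : ℤ) :
    (t + 1) * (3 * (t + 1) - 1) / 2 = t * (3 * t - 1) / 2 + (3 * t + 1) := by
  rw [← Int.add_mul_ediv_right _ _ two_ne_zero]
  ring_nf

lemma Int.eq_of_map_add_one_eq_mul {M : Type*} [MonoidWithZero M] [IsLeftCancelMulZero M]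
    {f g : ℤ → M} (c : ℤ → M) (hc : ∀ t, c t ≠ 0) (hf : ∀ t, f (t + 1) = c t * f t)
    (hg : ∀ t, g (t + 1) = c t * g t) (h0 : f 0 = g 0) (t : ℤ) : f t = g t := by
  induction t using Int.induction_on with
  | zero => exact h0
  | succ k ih => rw [hf, hg, ih]
  | pred k ih =>
    apply mul_left_cancel₀ (hc (-k - 1))
    rw [← hf, ← hg, sub_add_cancel, ih]

/-- the shift relation
`Q(q^{x+ty}, q^y) = q^{-3tx - t(3t-1)y/2} Q(q^x, q^y)`, stated for `0 < ‖q‖ < 1`. -/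
theorem quintuple_shift (t x y : ℤ) (hy : 0 < y) (q : ℂ)
    (hq0 : q ≠ 0) (hq1 : ‖q‖ < 1) :
    quint (q ^ (x + t * y)) (q ^ y) =
      q ^ (-(3 * t * x) - t * (3 * t - 1) / 2 * y) * quint (q ^ x) (q ^ y) := by
  refine Int.eq_of_map_add_one_eq_mul (f := fun t => quint (q ^ (x + t * y)) (q ^ y))
    (g := fun t => q ^ (-(3 * t * x) - t * (3 * t - 1) / 2 * y) * quint (q ^ x) (q ^ y))
    (fun t => q ^ (-y - 3 * (x + t * y))) (fun _ => zpow_ne_zero _ hq0)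
    (fun t => ?_) (fun t => ?_) (by simp) t
  · rw [← quint_zpow_add hq0 hy hq1, add_one_mul, add_assoc]
  · rw [← mul_assoc, ← zpow_add₀ hq0, pentagonal_succ]
    ring_nf
end

section
/- Let p ≥ 11 be prime and 0 < ℓ < p/2. Then there exists an integer x with 1 ≤ x ≤ p−2 such that neither x nor x+1 is congruent to ±ℓ or ±2ℓ modulo p. -/
/-- Let `p ≥ 11` be prime and `0 < ℓ < p/2`. Then there is an `x` with
`1 ≤ x ≤ p−2` such that neither `x` nor `x+1` is congruent to `±ℓ` or `±2ℓ` modulo `p`. -/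
theorem consecutive_pair_avoiding_residues (p ℓ : ℕ) (hp : p.Prime) (hp11 : 11 ≤ p)
    (hℓ0 : 0 < ℓ) (hℓ : 2 * ℓ < p) :
    ∃ x : ℕ, 1 ≤ x ∧ x ≤ p - 2 ∧
      ∀ c : ZMod p,
        (c = (ℓ : ZMod p) ∨ c = -(ℓ : ZMod p) ∨
          c = 2 * (ℓ : ZMod p) ∨ c = -(2 * (ℓ : ZMod p))) →
        (x : ZMod p) ≠ c ∧ (x : ZMod p) + 1 ≠ c := by
  haveI : NeZero p := ⟨by omega⟩
  set B : Finset ℕ := {ℓ, 2 * ℓ, p - ℓ, p - 2 * ℓ} with hB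
  set Bad : Finset ℕ :=
    (Finset.Icc 1 (p - 2)).filter (fun x => x ∈ B ∨ x + 1 ∈ B) with hBad
  have hsub : Bad ⊆ B ∪ B.image (· - 1) := by
    intro x hx
    simp only [hBad, Finset.mem_filter] at hx
    rcases hx.2 with h | h
    · exact Finset.mem_union_left _ h
    · refine Finset.mem_union_right _ ?_
      exact Finset.mem_image.mpr ⟨x + 1, h, by omega⟩
  have hcardB : B.card ≤ 4 := by
    refine le_trans (Finset.card_insert_le _ _) ?_
    refine Nat.succ_le_succ ?_
    refine le_trans (Finset.card_insert_le _ _) ?_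
    refine Nat.succ_le_succ ?_
    exact le_trans (Finset.card_insert_le _ _) (Nat.succ_le_succ (Finset.card_le_one.mpr
      (by simp)))
  have hcardBad : Bad.card ≤ 8 := by
    calc Bad.card ≤ (B ∪ B.image (· - 1)).card := Finset.card_le_card hsub
    _ ≤ B.card + (B.image (· - 1)).card := Finset.card_union_le _ _
    _ ≤ 4 + 4 := by
        exact Nat.add_le_add hcardB (le_trans (Finset.card_image_le) hcardB)
  have hIcc : (Finset.Icc 1 (p - 2)).card = p - 2 := by
    rw [Nat.card_Icc]; omega
  have : ∃ x ∈ Finset.Icc 1 (p - 2), x ∉ Bad := by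
    by_contra h
    push_neg at h
    have : Finset.Icc 1 (p - 2) ⊆ Bad := fun x hx => h x hx
    have := Finset.card_le_card this
    omega
  obtain ⟨x, hxIcc, hxgood⟩ := this
  simp only [Finset.mem_Icc] at hxIcc
  have hxnotbad : x ∉ B ∧ x + 1 ∉ B := by
    constructor <;> intro h <;> exact hxgood (Finset.mem_filter.mpr
      ⟨Finset.mem_Icc.mpr hxIcc, by tauto⟩)
  refine ⟨x, hxIcc.1, hxIcc.2, ?_⟩
  -- rewrite each c as cast of a natural in B
  have key : ∀ b : ℕ, b ∈ B → (x : ZMod p) ≠ (b : ZMod p) ∧ (x : ZMod p) + 1 ≠ (b : ZMod p) := by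
    intro b hb
    have hblt : b < p := by
      simp only [hB, Finset.mem_insert, Finset.mem_singleton] at hb
      rcases hb with rfl | rfl | rfl | rfl <;> omega
    constructor
    · intro h
      apply hxnotbad.1
      have : x = b := by
        have := congrArg ZMod.val h
        rwa [ZMod.val_natCast_of_lt (by omega), ZMod.val_natCast_of_lt hblt] at this
      rwa [this]
    · intro h
      apply hxnotbad.2
      have : x + 1 = b := by
        have h' : ((x + 1 : ℕ) : ZMod p) = (b : ZMod p) := by push_cast; rw [h]
        have := congrArg ZMod.val h'
        rwa [ZMod.val_natCast_of_lt (by omega), ZMod.val_natCast_of_lt hblt] at this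
      rwa [this]
  intro c hc
  have hneg1 : -(ℓ : ZMod p) = ((p - ℓ : ℕ) : ZMod p) := by
    rw [Nat.cast_sub (by omega), ZMod.natCast_self, zero_sub]
  have hneg2 : -(2 * (ℓ : ZMod p)) = ((p - 2 * ℓ : ℕ) : ZMod p) := by
    rw [Nat.cast_sub (by omega), ZMod.natCast_self, zero_sub]; push_cast; ring
  rcases hc with rfl | rfl | rfl | rfl
  · exact key ℓ (by simp [hB])
  · rw [hneg1]; exact key (p - ℓ) (by simp [hB])
  · rw [show (2 : ZMod p) * ℓ = ((2 * ℓ : ℕ) : ZMod p) by push_cast; ring]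
    exact key (2 * ℓ) (by simp [hB])
  · rw [hneg2]; exact key (p - 2 * ℓ) (by simp [hB])
end

section
/- Let p > 10 be prime and 0 < ℓ < p/2. Define coefficients c_t by Q(q^ℓ, q^p)/(q;q)_∞ = ∑_{t≥0} c_t q^t. Then all c_t are nonnegative, and there exists t_0 such that c_t > 0 for all t > t_0. -/
/-!
Splitting the exponents of `(q;q)_∞` by their residue modulo `p`, and the residues `2ℓ` and
`p - 2ℓ` further modulo `2p`, gives `Q(q^ℓ, q^p) · D = (q;q)_∞`, where `D` collects the
factors `(q^k; q^p)_∞` of the residues `k ∉ {ℓ, p - ℓ, p, 2ℓ, p - 2ℓ}` together with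
`(q^{2ℓ}, q^{2p-2ℓ}; q^{2p})_∞` (the five residues are distinct because `3ℓ ≠ p ≠ 4ℓ`).
So the quotient is `1 / D`, a product of geometric series `1 / (1 - q^e)`, and has nonnegative
coefficients. As `p > 10`, two consecutive residues `a, a + 1` survive, so `1 / D` dominates
`1 / ((1 - q^a)(1 - q^{a+1}))`, whose coefficient of `q^t` is positive as soon as `t ≥ a²`:
such `t` is a nonnegative combination of `a` and `a + 1`.
Identities between infinite products are checked modulo `X^n` for every `n`, where only
finitely many factors differ from `1`.
-/

open PowerSeries

/-- The q-Pochhammer infinite product `(q^x; q^p)_∞ = ∏_{k≥0} (1 - q^{x+kp})` as a formal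
power series (for `x ≥ 1` the coefficient of `q^n` is determined by the first `n+1`
factors, since every further factor is `1 + O(q^{n+1})`). -/
noncomputable def Pq (x p : ℕ) : PowerSeries ℚ :=
  PowerSeries.mk fun n =>
    PowerSeries.coeff n (∏ k ∈ Finset.range (n + 1), (1 - (PowerSeries.X : PowerSeries ℚ) ^ (x + k * p)))

/-- The quintuple product `Q(q^ℓ, q^p) = (q^ℓ,q^{p-ℓ},q^p;q^p)_∞ (q^{p+2ℓ},q^{p-2ℓ};q^{2p})_∞`
as a formal power series. -/
noncomputable def Qq (ℓ p : ℕ) : PowerSeries ℚ :=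
  Pq ℓ p * Pq (p - ℓ) p * Pq p p * Pq (p + 2 * ℓ) (2 * p) * Pq (p - 2 * ℓ) (2 * p)

open Finset

namespace QuintupleQuotient

local notation:max "π" n:max => Ideal.Quotient.mk (Ideal.span {(X : PowerSeries _) ^ n})

section Truncation

variable {R : Type*} [CommRing R]

theorem mk_eq_mk_iff {n : ℕ} {f g : R⟦X⟧} : π n f = π n g ↔ ∀ t < n, coeff t f = coeff t g := by
  simp only [Ideal.Quotient.eq, Ideal.mem_span_singleton, X_pow_dvd_iff, map_sub, sub_eq_zero]

theorem coeff_eq_of_mk_eq {n t : ℕ} {f g : R⟦X⟧} (h : π n f = π n g) (ht : t < n) :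
    coeff t f = coeff t g :=
  mk_eq_mk_iff.mp h t ht

theorem ext_of_forall_mk_eq {f g : R⟦X⟧} (h : ∀ n, π n f = π n g) : f = g :=
  ext fun t => coeff_eq_of_mk_eq (h (t + 1)) t.lt_succ_self

theorem mk_one_sub_X_pow {n e : ℕ} (h : n ≤ e) : π n (1 - X ^ e : R⟦X⟧) = 1 := by
  rw [map_sub, map_one, map_pow, sub_eq_self]
  refine pow_eq_zero_of_le h ?_
  rw [← map_pow, Ideal.Quotient.eq_zero_iff_mem]
  exact Ideal.mem_span_singleton_self _

theorem mk_inv_eq_of_mul_eq_one {K : Type*} [Field K] {n : ℕ} {f g h : K⟦X⟧}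
    (hf : constantCoeff f ≠ 0) (hgh : g * h = 1) (hfg : π n f = π n g) : π n f⁻¹ = π n h :=
  calc π n f⁻¹ = π n f⁻¹ * π n (g * h) := by rw [hgh, map_one, mul_one]
    _ = π n (f⁻¹ * f) * π n h := by rw [map_mul, map_mul, hfg, mul_assoc]
    _ = π n h := by rw [PowerSeries.inv_mul_cancel _ hf, map_one, one_mul]

end Truncation

section FinitePochhammer

variable {R : Type*} [CommRing R]

/-- The finite `q`-Pochhammer symbol `(q^x; q^d)_m`. -/
noncomputable def qPoch (x d m : ℕ) : R⟦X⟧ :=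
  ∏ k ∈ range m, (1 - X ^ (x + k * d))

theorem qPoch_succ' (x d m : ℕ) :
    qPoch (R := R) x d (m + 1) = (1 - X ^ x) * qPoch (x + d) d m := by
  rw [qPoch, prod_range_succ', zero_mul, add_zero, mul_comm]
  congr 1
  exact prod_congr rfl fun k _ => by ring_nf

theorem prod_qPoch_interleave (x c d m : ℕ) :
    ∏ i ∈ range c, qPoch (R := R) (x + i * d) (c * d) m = qPoch x d (m * c) := by
  induction m with
  | zero => simp [qPoch]
  | succ m ih =>
    simp only [qPoch, prod_range_succ, prod_mul_distrib] at ih ⊢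
    rw [ih, add_mul, one_mul, prod_range_add]
    congr 1
    exact prod_congr rfl fun i _ => by ring_nf

theorem mk_qPoch_of_le {n x d a b : ℕ} (hab : a ≤ b) (h : n ≤ x + a * d) :
    π n (qPoch (R := R) x d b) = π n (qPoch x d a) := by
  have htail : ∏ k ∈ Ico a b, π n (1 - X ^ (x + k * d) : R⟦X⟧) = 1 :=
    prod_eq_one fun k hk => mk_one_sub_X_pow (h.trans (by gcongr; exact (mem_Ico.mp hk).1))
  rw [qPoch, ← prod_range_mul_prod_Ico _ hab, map_mul, map_prod (π n) _ (Ico a b), htail,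
    mul_one, qPoch]

end FinitePochhammer

section Geometric

variable {R : Type*} [CommSemiring R]

variable (R) in
/-- `1 / (1 - q^e) = ∑ₖ q^{ek}`. -/
noncomputable def geom (e : ℕ) : R⟦X⟧ :=
  mk fun n => if e ∣ n then 1 else 0

theorem coeff_geom (e n : ℕ) : coeff n (geom R e) = if e ∣ n then 1 else 0 :=
  coeff_mk n _

theorem one_sub_X_pow_mul_geom {R : Type*} [CommRing R] {e : ℕ} (he : 0 < e) :
    (1 - X ^ e) * geom R e = 1 := by
  ext n
  rw [sub_mul, one_mul, map_sub, coeff_X_pow_mul', coeff_geom, coeff_one]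
  rcases Nat.eq_zero_or_pos n with rfl | hn
  · simp [he.ne']
  rw [if_neg hn.ne']
  rcases le_or_gt e n with h | h
  · have hdvd : e ∣ n - e ↔ e ∣ n := by
      rw [Nat.dvd_sub_self_right, or_iff_left_of_imp fun h' => by rw [le_antisymm h' h]]
    rw [if_pos h, coeff_geom, sub_eq_zero]
    exact if_congr hdvd.symm rfl rfl
  · rw [if_neg h.not_ge, if_neg fun hd => h.not_ge (Nat.le_of_dvd hn hd), sub_zero]

end Geometric

section Nonneg

variable (R : Type*) [CommSemiring R] [PartialOrder R] [IsOrderedRing R]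

def nonnegCoeffs : Subsemiring R⟦X⟧ where
  carrier := {f | ∀ n, 0 ≤ coeff n f}
  mul_mem' hf hg n := by
    rw [coeff_mul]
    exact sum_nonneg fun x _ => mul_nonneg (hf _) (hg _)
  one_mem' n := by
    rw [coeff_one]
    split_ifs <;> simp
  add_mem' hf hg n := by
    rw [map_add]
    exact add_nonneg (hf n) (hg n)
  zero_mem' n := by simp

variable {R}

theorem coeff_mul_coeff_zero_le {f g : R⟦X⟧} (hf : f ∈ nonnegCoeffs R) (hg : g ∈ nonnegCoeffs R)
    (t : ℕ) : coeff t f * coeff 0 g ≤ coeff t (f * g) := by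
  rw [coeff_mul]
  exact single_le_sum (f := fun x : ℕ × ℕ => coeff x.1 f * coeff x.2 g)
    (fun x _ => mul_nonneg (hf x.1) (hg x.2)) (a := (t, 0)) (mem_antidiagonal.mpr (add_zero t))

theorem geom_mem_nonnegCoeffs (e : ℕ) : geom R e ∈ nonnegCoeffs R := fun n => by
  rw [coeff_geom]
  split_ifs <;> simp

theorem one_le_coeff_geom_mul_geom_succ {a t : ℕ} (ha : 0 < a) (ht : a * a ≤ t) :
    1 ≤ coeff t (geom R a * geom R (a + 1)) := by
  have hmod : t % a ≤ t / a := (Nat.mod_lt t ha).le.trans ((Nat.le_div_iff_mul_le ha).mpr ht)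
  have hsplit : a * (t / a - t % a) + (a + 1) * (t % a) = t := by
    zify [hmod]
    have := Nat.div_add_mod t a
    zify at this
    linear_combination this
  rw [coeff_mul]
  convert single_le_sum (f := fun x : ℕ × ℕ => coeff x.1 (geom R a) * coeff x.2 (geom R (a + 1)))
    (fun x _ => mul_nonneg (geom_mem_nonnegCoeffs a x.1) (geom_mem_nonnegCoeffs (a + 1) x.2))
    (a := (_, _)) (mem_antidiagonal.mpr hsplit)
  simp [coeff_geom]

end Nonneg

section Inverse

variable {K : Type*} [Field K] [PartialOrder K] [IsOrderedRing K]

theorem inv_one_sub_X_pow {e : ℕ} (he : 0 < e) : (1 - X ^ e : K⟦X⟧)⁻¹ = geom K e :=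
  (PowerSeries.inv_eq_iff_mul_eq_one (by simp [he.ne'])).mpr <| by
    rw [mul_comm, one_sub_X_pow_mul_geom he]

variable (K) in
def invNonnegCoeffs : Submonoid K⟦X⟧ where
  carrier := {f | constantCoeff f ≠ 0 ∧ f⁻¹ ∈ nonnegCoeffs K}
  mul_mem' := fun ⟨hf0, hf⟩ ⟨hg0, hg⟩ =>
    ⟨by rw [map_mul]; exact mul_ne_zero hf0 hg0,
      by rw [PowerSeries.mul_inv_rev]; exact mul_mem hg hf⟩
  one_mem' := ⟨by simp, by simp⟩

theorem coeff_inv_consecutive_factors_pos {a t : ℕ} (ha : 0 < a) (ht : a * a ≤ t) {g : K⟦X⟧}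
    (hg : g ∈ invNonnegCoeffs K) : 0 < coeff t ((1 - X ^ a) * (1 - X ^ (a + 1)) * g)⁻¹ := by
  have hg0 : 0 < coeff 0 g⁻¹ := (hg.2 0).lt_of_ne' (by simpa [constantCoeff_inv] using hg.1)
  rw [PowerSeries.mul_inv_rev, PowerSeries.mul_inv_rev, inv_one_sub_X_pow ha,
    inv_one_sub_X_pow a.succ_pos, mul_comm, mul_comm (geom K _)]
  calc 0 < 1 * coeff 0 g⁻¹ := by rwa [one_mul]
    _ ≤ coeff t (geom K a * geom K (a + 1)) * coeff 0 g⁻¹ := by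
      gcongr
      exact one_le_coeff_geom_mul_geom_succ ha ht
    _ ≤ coeff t (geom K a * geom K (a + 1) * g⁻¹) :=
      coeff_mul_coeff_zero_le (mul_mem (geom_mem_nonnegCoeffs a) (geom_mem_nonnegCoeffs _)) hg.2 t

end Inverse

section Pochhammer

theorem coeff_Pq (x d n : ℕ) : coeff n (Pq x d) = coeff n (qPoch x d (n + 1)) :=
  coeff_mk _ _

theorem mk_Pq {n x d m : ℕ} (hd : 0 < d) (hnm : n ≤ m) : π n (Pq x d) = π n (qPoch x d m) :=
  mk_eq_mk_iff.mpr fun t ht => by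
    rw [coeff_Pq]
    exact coeff_eq_of_mk_eq (mk_qPoch_of_le (by omega) (by nlinarith)).symm t.lt_succ_self

theorem Pq_eq_one_sub_X_pow_mul {x d : ℕ} (hd : 0 < d) : Pq x d = (1 - X ^ x) * Pq (x + d) d :=
  ext_of_forall_mk_eq fun n => by
    rw [mk_Pq hd n.le_succ, qPoch_succ', map_mul, map_mul, mk_Pq hd le_rfl]

theorem constantCoeff_Pq {x : ℕ} (hx : 0 < x) (d : ℕ) : constantCoeff (Pq x d) = 1 := by
  rw [← coeff_zero_eq_constantCoeff_apply, coeff_Pq, qPoch, prod_range_one]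
  simp [hx.ne']

theorem qPoch_mul_prod_geom {R : Type*} [CommRing R] {x : ℕ} (hx : 0 < x) (d m : ℕ) :
    qPoch x d m * ∏ k ∈ range m, geom R (x + k * d) = 1 := by
  rw [qPoch, ← prod_mul_distrib]
  exact prod_eq_one fun k _ => one_sub_X_pow_mul_geom (by omega)

theorem Pq_mem_invNonnegCoeffs {x d : ℕ} (hx : 0 < x) (hd : 0 < d) :
    Pq x d ∈ invNonnegCoeffs ℚ := by
  refine ⟨by simp [constantCoeff_Pq hx], fun n => ?_⟩
  have hinv := mk_inv_eq_of_mul_eq_one (by simp [constantCoeff_Pq hx])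
    (qPoch_mul_prod_geom hx d (n + 1)) (mk_Pq hd le_rfl)
  rw [coeff_eq_of_mk_eq hinv n.lt_succ_self]
  exact prod_mem (fun k _ => geom_mem_nonnegCoeffs _) n

end Pochhammer

section Residues

theorem qPoch_mul_qPoch_add {R : Type*} [CommRing R] (x d m : ℕ) :
    qPoch (R := R) x (2 * d) m * qPoch (x + d) (2 * d) m = qPoch x d (m * 2) := by
  simpa [prod_range_succ] using prod_qPoch_interleave (R := R) x 2 d m

theorem prod_Icc_qPoch {R : Type*} [CommRing R] (p m : ℕ) :
    ∏ r ∈ Icc 1 p, qPoch (R := R) r p m = qPoch 1 1 (m * p) := by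
  rw [← Ico_add_one_right_eq_Icc, prod_Ico_eq_prod_range, add_tsub_cancel_right]
  simpa using prod_qPoch_interleave (R := R) 1 p 1 m

def excludedResidues (ℓ p : ℕ) : Finset ℕ :=
  {ℓ, p - ℓ, p, 2 * ℓ, p - 2 * ℓ}

def allowedResidues (ℓ p : ℕ) : Finset ℕ :=
  Icc 1 p \ excludedResidues ℓ p

/-- The product `(q^{2ℓ}, q^{2p-2ℓ}; q^{2p})_∞ ∏_{k allowed} (q^k; q^p)_∞`. -/
noncomputable def complementaryProduct (ℓ p : ℕ) : ℚ⟦X⟧ :=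
  Pq (2 * ℓ) (2 * p) * Pq (2 * p - 2 * ℓ) (2 * p) * ∏ r ∈ allowedResidues ℓ p, Pq r p

theorem prod_excludedResidues {M : Type*} [CommMonoid M] {ℓ p : ℕ} (hℓ0 : 0 < ℓ)
    (hℓ : 2 * ℓ < p) (h3 : 3 * ℓ ≠ p) (h4 : 4 * ℓ ≠ p) (f : ℕ → M) :
    ∏ r ∈ excludedResidues ℓ p, f r = f ℓ * f (p - ℓ) * f p * f (2 * ℓ) * f (p - 2 * ℓ) := by
  rw [excludedResidues, prod_insert, prod_insert, prod_insert, prod_insert, prod_singleton]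
  · simp only [mul_assoc]
  all_goals simp only [mem_insert, mem_singleton]; omega

theorem excludedResidues_subset {ℓ p : ℕ} (hℓ0 : 0 < ℓ) (hℓ : 2 * ℓ < p) :
    excludedResidues ℓ p ⊆ Icc 1 p := by
  intro r hr
  simp only [excludedResidues, mem_insert, mem_singleton] at hr
  rw [mem_Icc]
  omega

theorem Qq_mul_complementaryProduct {ℓ p : ℕ} (hℓ0 : 0 < ℓ) (hℓ : 2 * ℓ < p) (h3 : 3 * ℓ ≠ p)
    (h4 : 4 * ℓ ≠ p) : Qq ℓ p * complementaryProduct ℓ p = Pq 1 1 := by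
  have hp : 0 < p := by omega
  refine ext_of_forall_mk_eq fun n => ?_
  have htrunc : ∀ x, π n (Pq x p) = π n (qPoch x p (n * 2)) := fun x => mk_Pq hp (by omega)
  have htrunc₂ : ∀ x, π n (Pq x (2 * p)) = π n (qPoch x (2 * p) n) := fun x =>
    mk_Pq (by omega) le_rfl
  have hfinite : qPoch ℓ p (n * 2) * qPoch (p - ℓ) p (n * 2) * qPoch p p (n * 2) *
      qPoch (p + 2 * ℓ) (2 * p) n * qPoch (p - 2 * ℓ) (2 * p) n *
      (qPoch (2 * ℓ) (2 * p) n * qPoch (2 * p - 2 * ℓ) (2 * p) n *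
        ∏ r ∈ allowedResidues ℓ p, qPoch r p (n * 2)) = qPoch (R := ℚ) 1 1 (n * 2 * p) := by
    rw [← prod_Icc_qPoch, ← prod_sdiff (excludedResidues_subset hℓ0 hℓ),
      prod_excludedResidues hℓ0 hℓ h3 h4, ← qPoch_mul_qPoch_add (2 * ℓ),
      ← qPoch_mul_qPoch_add (p - 2 * ℓ), show 2 * p - 2 * ℓ = p - 2 * ℓ + p by omega,
      add_comm (2 * ℓ) p, allowedResidues]
    ring
  calc π n (Qq ℓ p * complementaryProduct ℓ p) = π n (qPoch 1 1 (n * 2 * p)) := by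
        rw [← hfinite]
        simp only [Qq, complementaryProduct, map_mul, map_prod, htrunc, htrunc₂]
    _ = π n (Pq 1 1) := (mk_Pq one_pos (by nlinarith)).symm

theorem pos_of_mem_allowedResidues {ℓ p r : ℕ} (hr : r ∈ allowedResidues ℓ p) : 0 < r :=
  (mem_Icc.mp (mem_sdiff.mp hr).1).1

theorem complementaryProduct_mem_invNonnegCoeffs {ℓ p : ℕ} (hℓ0 : 0 < ℓ) (hℓ : 2 * ℓ < p) :
    complementaryProduct ℓ p ∈ invNonnegCoeffs ℚ := by
  refine mul_mem (mul_mem (Pq_mem_invNonnegCoeffs (by omega) (by omega))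
    (Pq_mem_invNonnegCoeffs (by omega) (by omega))) (prod_mem fun r hr => ?_)
  exact Pq_mem_invNonnegCoeffs (pos_of_mem_allowedResidues hr) (by omega)

theorem exists_consecutive_mem_allowedResidues {ℓ p : ℕ} (hp : 10 < p) :
    ∃ a, a ∈ allowedResidues ℓ p ∧ a + 1 ∈ allowedResidues ℓ p := by
  -- the five pairs `{2i+1, 2i+2}`, `i < 5`, lie in `[1, p)`, and the four values
  -- `ℓ, p - ℓ, 2ℓ, p - 2ℓ` meet at most four of them
  obtain ⟨i, hi, hfree⟩ := exists_mem_notMem_of_card_lt_card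
    (s := ({ℓ, p - ℓ, 2 * ℓ, p - 2 * ℓ} : Finset ℕ).image fun r => (r - 1) / 2) (t := range 5)
    ((card_image_le.trans card_le_four).trans_lt (by simp))
  simp only [mem_range] at hi
  simp only [mem_image, mem_insert, mem_singleton, not_exists, not_and, forall_eq_or_imp,
    forall_eq] at hfree
  refine ⟨2 * i + 1, ?_, ?_⟩ <;>
    simp only [allowedResidues, excludedResidues, mem_sdiff, mem_Icc, mem_insert,
      mem_singleton] <;> omega

theorem exists_complementaryProduct_eq_mul {ℓ p a : ℕ} (hℓ0 : 0 < ℓ) (hℓ : 2 * ℓ < p)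
    (ha : a ∈ allowedResidues ℓ p) (ha1 : a + 1 ∈ allowedResidues ℓ p) :
    ∃ g ∈ invNonnegCoeffs ℚ, complementaryProduct ℓ p = (1 - X ^ a) * (1 - X ^ (a + 1)) * g := by
  have hp : 0 < p := by omega
  rw [complementaryProduct, ← mul_prod_erase _ _ ha,
    ← mul_prod_erase _ _ (mem_erase.mpr ⟨a.succ_ne_self, ha1⟩),
    Pq_eq_one_sub_X_pow_mul hp (x := a), Pq_eq_one_sub_X_pow_mul hp (x := a + 1)]
  refine ⟨Pq (a + p) p * Pq (a + 1 + p) p * (Pq (2 * ℓ) (2 * p) * Pq (2 * p - 2 * ℓ) (2 * p) *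
    ∏ r ∈ ((allowedResidues ℓ p).erase a).erase (a + 1), Pq r p), ?_, by ring⟩
  refine mul_mem (mul_mem ?_ ?_) (mul_mem (mul_mem ?_ ?_) (prod_mem fun r hr => ?_)) <;>
    refine Pq_mem_invNonnegCoeffs ?_ (by omega) <;>
    first | omega | exact pos_of_mem_allowedResidues (mem_of_mem_erase (mem_of_mem_erase hr))

end Residues

end QuintupleQuotient

open QuintupleQuotient

/-- for prime `p > 10` and `0 < ℓ < p/2`, the coefficients `c_t` of
`Q(q^ℓ,q^p)/(q;q)_∞` are all nonnegative and eventually positive. -/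
theorem quintuple_quotient_eventually_positive (p ℓ : ℕ) (hp : p.Prime) (hp10 : 10 < p)
    (hℓ0 : 0 < ℓ) (hℓ : 2 * ℓ < p) :
    (∀ t : ℕ, 0 ≤ PowerSeries.coeff t (Qq ℓ p * (Pq 1 1)⁻¹)) ∧
      ∃ t₀ : ℕ, ∀ t > t₀, 0 < PowerSeries.coeff t (Qq ℓ p * (Pq 1 1)⁻¹) := by
  have h3 : 3 * ℓ ≠ p := fun h => by
    have := hp.eq_one_or_self_of_dvd 3 ⟨ℓ, h.symm⟩
    omega
  have h4 : 4 * ℓ ≠ p := fun h => by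
    have := hp.eq_one_or_self_of_dvd 2 ⟨2 * ℓ, by omega⟩
    omega
  have hC := complementaryProduct_mem_invNonnegCoeffs hℓ0 hℓ
  have hquot : Qq ℓ p * (Pq 1 1)⁻¹ = (complementaryProduct ℓ p)⁻¹ := by
    rw [eq_inv_iff_mul_eq_one hC.1, mul_right_comm, Qq_mul_complementaryProduct hℓ0 hℓ h3 h4,
      PowerSeries.mul_inv_cancel _ (by simp [constantCoeff_Pq])]
  obtain ⟨a, ha, ha1⟩ := exists_consecutive_mem_allowedResidues (ℓ := ℓ) hp10
  obtain ⟨g, hg, hCg⟩ := exists_complementaryProduct_eq_mul hℓ0 hℓ ha ha1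
  refine ⟨fun t => hquot ▸ hC.2 t, a * a, fun t ht => ?_⟩
  rw [hquot, hCg]
  exact coeff_inv_consecutive_factors_pos (pos_of_mem_allowedResidues ha) ht.le hg
end
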